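/- Let G be a nontrivial additive group and let (X_G, ρ) be the metric space of pairs (a, f), a > 0, f : ℝ → G with f = 0 on (−∞, a], f eventually 0, f piecewise constant from the left on (a, ∞), with metric ρ(p,q) = (c(p,q) − a) + (c(p,q) − b) where c(p,q) = max(a, b, inf{x : f = g on (x, ∞)}). Then X_G is locally complete and the completeness radius at the point p = (a, f) equals a: for every r with 0 ≤ r < a, the closed ball {q : ρ(p,q) ≤ r} is a complete subset of X_G, while the closed ball {q : ρ(p,q) ≤ a} is not complete. -/
import Mathlib

open Filter Set Topology

/-- A point of the tree `X_G`: a pair `(a, f)` with `a > 0`, `f : ℝ → G` vanishing on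
`(-∞, a]`, eventually zero, and piecewise constant from the left on `(a, ∞)`. -/
structure TreePt (G : Type*) [AddGroup G] where
  a : ℝ
  f : ℝ → G
  a_pos : 0 < a
  f_zero : ∀ t : ℝ, t ≤ a → f t = 0
  f_ev : ∃ b : ℝ, ∀ t : ℝ, b ≤ t → f t = 0
  f_pcl : ∀ x : ℝ, a < x → ∃ ε > 0, ∀ s ∈ Set.Icc (x - ε) x ∩ Set.Ioi a, f s = f x

/-- `c(p,q) = max(a, b, inf {x | f = g on (x, ∞)})`. -/
noncomputable def cval {G : Type*} [AddGroup G] (p q : TreePt G) : ℝ :=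
  max (max p.a q.a) (sInf {x : ℝ | ∀ t : ℝ, x < t → p.f t = q.f t})

/-- The metric `ρ(p,q) = (c(p,q) - a) + (c(p,q) - b)` on `X_G`. -/
noncomputable def rho {G : Type*} [AddGroup G] (p q : TreePt G) : ℝ :=
  (cval p q - p.a) + (cval p q - q.a)

/-- The partial order: `(a,f) ⪯ (b,g)` iff `a ≤ b` and `f = g` on `(b, ∞)`. -/
def tle {G : Type*} [AddGroup G] (p q : TreePt G) : Prop :=
  p.a ≤ q.a ∧ ∀ t : ℝ, q.a < t → p.f t = q.f t

section Aux

variable {G : Type*} [AddGroup G]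

lemma agree_exists (p q : TreePt G) : ∃ x : ℝ, ∀ t : ℝ, x < t → p.f t = q.f t := by
  obtain ⟨b1, hb1⟩ := p.f_ev
  obtain ⟨b2, hb2⟩ := q.f_ev
  refine ⟨max b1 b2, fun t ht => ?_⟩
  rw [hb1 t (le_of_lt (lt_of_le_of_lt (le_max_left _ _) ht)),
    hb2 t (le_of_lt (lt_of_le_of_lt (le_max_right _ _) ht))]

lemma le_cval_left (p q : TreePt G) : p.a ≤ cval p q :=
  le_trans (le_max_left _ _) (le_max_left _ _)

lemma le_cval_right (p q : TreePt G) : q.a ≤ cval p q :=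
  le_trans (le_max_right _ _) (le_max_left _ _)

lemma cval_le (p q : TreePt G) {x : ℝ} (h1 : p.a ≤ x) (h2 : q.a ≤ x)
    (h : ∀ t : ℝ, x < t → p.f t = q.f t) : cval p q ≤ x := by
  refine max_le (max_le h1 h2) ?_
  by_cases hb : BddBelow {x : ℝ | ∀ t : ℝ, x < t → p.f t = q.f t}
  · exact csInf_le hb h
  · rw [Real.sInf_of_not_bddBelow hb]
    linarith [p.a_pos]

lemma agree_of_cval_lt (p q : TreePt G) {t : ℝ} (ht : cval p q < t) : p.f t = q.f t := by
  have hs : sInf {x : ℝ | ∀ s : ℝ, x < s → p.f s = q.f s} < t :=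
    lt_of_le_of_lt (le_max_right _ _) ht
  by_cases hb : BddBelow {x : ℝ | ∀ s : ℝ, x < s → p.f s = q.f s}
  · obtain ⟨x, hx, hxt⟩ := (csInf_lt_iff hb (agree_exists p q)).1 hs
    exact hx t hxt
  · obtain ⟨x, hx, hxt⟩ := not_bddBelow_iff.1 hb t
    exact hx t hxt

end Aux

/-- `X_G` is locally complete and the completeness radius at `p = (a, f)` equals
`a`: closed balls of radius `r < a` about `p` are complete, the closed ball of
radius `a` is not. -/
theorem stmt16 {G : Type*} [AddGroup G] [Nontrivial G] [MetricSpace (TreePt G)]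
    (hdist : ∀ p q : TreePt G, dist p q = rho p q) (p : TreePt G) :
    (∀ r : ℝ, 0 ≤ r → r < p.a → IsComplete (Metric.closedBall p r)) ∧
    ¬ IsComplete (Metric.closedBall p p.a) := by
  classical
  constructor
  · -- closed balls of radius `r < p.a` are complete
    intro r hr0 hr
    rw [← completeSpace_coe_iff_isComplete]
    refine Metric.complete_of_cauchySeq_tendsto fun u hu => ?_
    set v : ℕ → TreePt G := fun n => (u n : TreePt G) with hv_def
    have hv : CauchySeq v := uniformContinuous_subtype_val.comp_cauchySeq hu
    have hmem : ∀ n, v n ∈ Metric.closedBall p r := fun n => (u n).2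
    set an : ℕ → ℝ := fun n => (v n).a with han_def
    -- each coordinate `a_n` is at least `p.a - r`
    have h_an_lb : ∀ n, p.a - r ≤ an n := by
      intro n
      have h1 : dist p (v n) ≤ r := by
        have := hmem n; rwa [Metric.mem_closedBall, dist_comm] at this
      rw [hdist, rho] at h1
      have h2 := le_cval_left p (v n)
      linarith
    -- `a_n` is Cauchy
    have habs : ∀ a b : TreePt G, |a.a - b.a| ≤ dist a b := by
      intro a b
      rw [hdist, rho, abs_sub_le_iff]
      have h1 := le_cval_left a b
      have h2 := le_cval_right a b
      constructor <;> linarith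
    have h_an_cauchy : CauchySeq an := by
      rw [Metric.cauchySeq_iff] at hv ⊢
      intro ε hε
      obtain ⟨N, hN⟩ := hv ε hε
      refine ⟨N, fun m hm n hn => ?_⟩
      calc dist (an m) (an n) = |(v m).a - (v n).a| := by rw [Real.dist_eq]
        _ ≤ dist (v m) (v n) := habs _ _
        _ < ε := hN m hm n hn
    obtain ⟨A, hA⟩ := cauchySeq_tendsto_of_complete h_an_cauchy
    have hA_lb : p.a - r ≤ A := ge_of_tendsto hA (Eventually.of_forall h_an_lb)
    have hA_pos : 0 < A := by linarith
    -- tail lemma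
    have htail : ∀ ε : ℝ, 0 < ε → ∃ N, ∀ n, N ≤ n →
        |an n - A| < ε ∧ ∀ m, N ≤ m → cval (v n) (v m) < A + ε := by
      intro ε hε
      obtain ⟨N1, hN1⟩ := Metric.cauchySeq_iff.1 hv (ε / 2) (by linarith)
      obtain ⟨N2, hN2⟩ := (Metric.tendsto_atTop.1 hA) (ε / 2) (by linarith)
      refine ⟨max N1 N2, fun n hn => ?_⟩
      have hn1 : N1 ≤ n := le_trans (le_max_left _ _) hn
      have hn2 : N2 ≤ n := le_trans (le_max_right _ _) hn
      have ha : |an n - A| < ε / 2 := by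
        have := hN2 n hn2; rwa [Real.dist_eq] at this
      refine ⟨by linarith [abs_lt.1 ha], fun m hm => ?_⟩
      have hm1 : N1 ≤ m := le_trans (le_max_left _ _) hm
      have hd : dist (v n) (v m) < ε / 2 := hN1 n hn1 m hm1
      rw [hdist, rho] at hd
      have h2 := le_cval_right (v n) (v m)
      have h3 := abs_lt.1 ha
      linarith
    -- define the limit function
    set F : ℝ → G := fun t =>
      if ht : A < t ∧ ∃ g : G, ∃ N : ℕ, ∀ n, N ≤ n → (v n).f t = g then ht.2.choose else 0
      with hF_def
    have hF0 : ∀ t : ℝ, t ≤ A → F t = 0 := by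
      intro t ht
      rw [hF_def]
      exact dif_neg (fun hc => absurd hc.1 (not_lt.2 ht))
    have hF_ev_val : ∀ t : ℝ, A < t → ∃ N : ℕ, ∀ n, N ≤ n → (v n).f t = F t := by
      intro t ht
      have hε : (0 : ℝ) < (t - A) / 2 := by linarith
      obtain ⟨N, hN⟩ := htail ((t - A) / 2) hε
      have hex : ∃ g : G, ∃ N : ℕ, ∀ n, N ≤ n → (v n).f t = g := by
        refine ⟨(v N).f t, N, fun n hn => ?_⟩
        exact agree_of_cval_lt (v n) (v N)
          (lt_of_lt_of_le ((hN n hn).2 N le_rfl) (by linarith))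
      have hcond : A < t ∧ ∃ g : G, ∃ N : ℕ, ∀ n, N ≤ n → (v n).f t = g := ⟨ht, hex⟩
      have hFt : F t = hcond.2.choose := dif_pos hcond
      obtain ⟨M, hM⟩ := hcond.2.choose_spec
      exact ⟨M, fun n hn => by rw [hM n hn, hFt]⟩
    -- `F` agrees with the tail of the sequence beyond `A + ε`
    have hFtail : ∀ ε : ℝ, 0 < ε → ∃ N, ∀ n, N ≤ n →
        |an n - A| < ε ∧ ∀ t : ℝ, A + ε < t → (v n).f t = F t := by
      intro ε hε
      obtain ⟨N, hN⟩ := htail ε hε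
      refine ⟨N, fun n hn => ⟨(hN n hn).1, fun t ht => ?_⟩⟩
      obtain ⟨M, hM⟩ := hF_ev_val t (by linarith)
      have h1 : (v n).f t = (v (max N M)).f t :=
        agree_of_cval_lt _ _ (lt_trans ((hN n hn).2 (max N M) (le_max_left _ _)) ht)
      rw [h1, hM (max N M) (le_max_right _ _)]
    -- build the limit point
    set q : TreePt G :=
      { a := A
        f := F
        a_pos := hA_pos
        f_zero := hF0
        f_ev := by
          obtain ⟨N, hN⟩ := hFtail 1 one_pos
          obtain ⟨b, hb⟩ := (v N).f_ev
          refine ⟨max b (A + 2), fun t ht => ?_⟩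
          have h1 : A + 1 < t := by
            have := le_trans (le_max_right b (A + 2)) ht; linarith
          rw [← (hN N le_rfl).2 t h1, hb t (le_trans (le_max_left _ _) ht)]
        f_pcl := by
          intro x hx
          have hε : (0 : ℝ) < (x - A) / 4 := by linarith
          set ε : ℝ := (x - A) / 4 with hεdef
          obtain ⟨N, hN⟩ := hFtail ε hε
          have haN : |an N - A| < ε := (hN N le_rfl).1
          have haN' : (v N).a < A + ε := by
            have := abs_lt.1 haN
            have : an N < A + ε := by linarith [(abs_lt.1 haN).2]
            exact this
          obtain ⟨δ, hδ, hδs⟩ := (v N).f_pcl x (by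
            have : A + ε < x := by rw [hεdef]; linarith
            linarith)
          refine ⟨min δ ε, lt_min hδ hε, fun s hs => ?_⟩
          obtain ⟨⟨hs1, hs2⟩, _⟩ := hs
          have hsmin : x - ε ≤ s := le_trans (by
            have := min_le_right δ ε; linarith) hs1
          have hsε : A + ε < s := by rw [hεdef] at hsmin ⊢; linarith
          have h1 : F s = (v N).f s := ((hN N le_rfl).2 s hsε).symm
          have h2 : F x = (v N).f x := ((hN N le_rfl).2 x (by rw [hεdef]; linarith)).symm
          have h3 : (v N).f s = (v N).f x := by
            refine hδs s ⟨⟨?_, hs2⟩, ?_⟩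
            · have := min_le_left δ ε; linarith
            · show (v N).a < s; linarith
          show F s = F x
          rw [h1, h3, h2] } with hq_def
    -- convergence
    have hconv : Tendsto v atTop (𝓝 q) := by
      rw [Metric.tendsto_atTop]
      intro ε hε
      obtain ⟨N, hN⟩ := hFtail (ε / 4) (by linarith)
      refine ⟨N, fun n hn => ?_⟩
      have h1 := abs_lt.1 (hN n hn).1
      have h2 := (hN n hn).2
      have hc_le : cval (v n) q ≤ A + ε / 4 := by
        refine cval_le (v n) q (by show an n ≤ A + ε / 4; linarith) ?_ ?_
        · show A ≤ A + ε / 4; linarith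
        · intro t ht; exact h2 t ht
      have hg1 : an n ≤ cval (v n) q := le_cval_left _ _
      have hg2 : A ≤ cval (v n) q := le_cval_right (v n) q
      rw [hdist, rho]
      show cval (v n) q - an n + (cval (v n) q - A) < ε
      linarith
    have hq_mem : q ∈ Metric.closedBall p r :=
      Metric.isClosed_closedBall.mem_of_tendsto hconv (Eventually.of_forall hmem)
    exact ⟨⟨q, hq_mem⟩, tendsto_subtype_rng.2 hconv⟩
  · -- the closed ball of radius `p.a` is not complete
    intro hc
    -- the escaping sequence
    set w : ℕ → TreePt G := fun n =>
      { a := p.a / (n + 1)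
        f := p.f
        a_pos := div_pos p.a_pos (by positivity)
        f_zero := fun t ht => p.f_zero t (le_trans ht (div_le_self p.a_pos.le (by
          have := Nat.cast_nonneg (α := ℝ) n; linarith)))
        f_ev := p.f_ev
        f_pcl := by
          intro x hx
          rcases le_or_gt x p.a with hxa | hxa
          · exact ⟨1, one_pos, fun s hs =>
              by rw [p.f_zero s (le_trans hs.1.2 hxa), p.f_zero x hxa]⟩
          · obtain ⟨ε, hε, hεs⟩ := p.f_pcl x hxa
            refine ⟨min ε ((x - p.a) / 2), lt_min hε (by linarith), fun s hs => ?_⟩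
            obtain ⟨⟨hs1, hs2⟩, _⟩ := hs
            refine hεs s ⟨⟨?_, hs2⟩, ?_⟩
            · have := min_le_left ε ((x - p.a) / 2); linarith
            · have := min_le_right ε ((x - p.a) / 2)
              show p.a < s; linarith } with hw_def
    have hwa : ∀ n, (w n).a = p.a / (n + 1) := fun n => rfl
    have hwa_le : ∀ n, (w n).a ≤ p.a := by
      intro n
      rw [hwa]
      exact div_le_self p.a_pos.le (by have := Nat.cast_nonneg (α := ℝ) n; linarith)
    have hwa_pos : ∀ n, 0 < (w n).a := fun n => (w n).a_pos
    -- distances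
    have hdp : ∀ n, dist p (w n) = p.a - (w n).a := by
      intro n
      have hceq : cval p (w n) = p.a := by
        refine le_antisymm (cval_le p (w n) le_rfl (hwa_le n) (fun t _ => rfl))
          (le_cval_left p (w n))
      rw [hdist, rho, hceq]; ring
    have hdw : ∀ n m, dist (w n) (w m) = |(w n).a - (w m).a| := by
      intro n m
      have hceq : cval (w n) (w m) = max (w n).a (w m).a := by
        refine le_antisymm (cval_le (w n) (w m) (le_max_left _ _) (le_max_right _ _)
          (fun t _ => rfl)) ?_
        exact max_le (le_cval_left _ _) (le_cval_right _ _)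
      rw [hdist, rho, hceq]
      rcases le_total (w n).a (w m).a with h | h
      · rw [max_eq_right h, abs_of_nonpos (by linarith)]; ring
      · rw [max_eq_left h, abs_of_nonneg (by linarith)]; ring
    -- the sequence lies in the closed ball
    have hmem : ∀ n, w n ∈ Metric.closedBall p p.a := by
      intro n
      rw [Metric.mem_closedBall, dist_comm, hdp n]
      linarith [hwa_pos n]
    -- `(w n).a → 0`
    have hwa_tendsto : Tendsto (fun n => (w n).a) atTop (𝓝 0) := by
      have h1 : Tendsto (fun n : ℕ => p.a * (1 / ((n : ℝ) + 1))) atTop (𝓝 (p.a * 0)) :=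
        tendsto_const_nhds.mul tendsto_one_div_add_atTop_nhds_zero_nat
      rw [mul_zero] at h1
      convert h1 using 2 with n
      rw [hwa]; ring
    -- `w` is Cauchy
    have hw_cauchy : CauchySeq w := by
      have hac : CauchySeq (fun n => (w n).a) := hwa_tendsto.cauchySeq
      rw [Metric.cauchySeq_iff] at hac ⊢
      intro ε hε
      obtain ⟨N, hN⟩ := hac ε hε
      refine ⟨N, fun m hm n hn => ?_⟩
      rw [hdw]
      have := hN m hm n hn
      rwa [Real.dist_eq] at this
    -- apply completeness to derive a contradiction
    obtain ⟨x, hx_mem, hx⟩ := hc (Filter.map w atTop) hw_cauchy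
      (le_principal_iff.2 (Filter.mem_map.2 (Eventually.of_forall hmem)))
    have hx_tendsto : Tendsto w atTop (𝓝 x) := hx
    have hlow : ∀ n, x.a - (w n).a ≤ dist (w n) x := by
      intro n
      rw [hdist, rho]
      have h1 := le_cval_right (w n) x
      have h2 := le_cval_left (w n) x
      linarith
    obtain ⟨N1, hN1⟩ := (Metric.tendsto_atTop.1 hx_tendsto) (x.a / 2) (by linarith [x.a_pos])
    obtain ⟨N2, hN2⟩ := (Metric.tendsto_atTop.1 hwa_tendsto) (x.a / 2) (by linarith [x.a_pos])
    set N := max N1 N2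
    have ha1 : dist (w N) x < x.a / 2 := hN1 N (le_max_left _ _)
    have ha2 : (w N).a < x.a / 2 := by
      have := hN2 N (le_max_right _ _)
      rw [Real.dist_eq, sub_zero, abs_of_pos (hwa_pos N)] at this
      exact this
    have := hlow N
    linarith
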